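/- arXiv:2305.05799 — 3 statements merged into one kernel-verified Lean document; each statement's English description precedes it below -/
import Mathlib

section
/- Let X be a real n×m matrix, Y a real d×m matrix, and β > 0. Define the ridge cost J(W) = ‖W * X − Y‖_F² + β ‖W‖_F² for W a real d×n matrix, where ‖·‖_F is the Frobenius norm. Then W* = Y * Xᵀ * (X * Xᵀ + β • 1)⁻¹ satisfies J(W*) ≤ J(W) for every d×n matrix W, and J(W*) = J(W) implies W = W*; i.e., W* is the unique minimizer of the ridge cost. -/
/-- The squared Frobenius norm of a real matrix. -/
noncomputable def frobSq {n m : Type*} [Fintype n] [Fintype m]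
    (M : Matrix n m ℝ) : ℝ :=
  ∑ i, ∑ j, (M i j) ^ 2

/-!
Completing the square: with `A = X Xᵀ + β I` and `W* A = Y Xᵀ`, the cross terms of
`J (W* + D)` cancel, so `J (W* + D) = J W* + ‖D X‖_F² + β ‖D‖_F²`, and the last term
vanishes only for `D = 0`.
-/

open Matrix

section Frobenius

variable {n m : Type*} [Fintype n] [Fintype m]

theorem frobSq_eq_trace (M : Matrix n m ℝ) : frobSq M = (M * Mᵀ).trace := by
  simp [frobSq, trace, mul_apply, sq]

theorem frobSq_nonneg (M : Matrix n m ℝ) : 0 ≤ frobSq M :=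
  Finset.sum_nonneg fun _ _ => Finset.sum_nonneg fun _ _ => sq_nonneg _

theorem frobSq_eq_zero_iff {M : Matrix n m ℝ} : frobSq M = 0 ↔ M = 0 := by
  rw [frobSq_eq_trace, ← conjTranspose_eq_transpose_of_trivial,
    trace_mul_conjTranspose_self_eq_zero_iff]

theorem frobSq_add (M N : Matrix n m ℝ) :
    frobSq (M + N) = frobSq M + frobSq N + 2 * (M * Nᵀ).trace := by
  have hsymm : (N * Mᵀ).trace = (M * Nᵀ).trace := by
    rw [← trace_transpose, transpose_mul, transpose_transpose]
  simp only [frobSq_eq_trace, transpose_add, Matrix.add_mul, Matrix.mul_add, trace_add, hsymm]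
  ring

end Frobenius

section Ridge

variable {n m d : Type*} [Fintype n] [Fintype m] [Fintype d] [DecidableEq n]

noncomputable def ridgeCost (X : Matrix n m ℝ) (Y : Matrix d m ℝ) (β : ℝ)
    (W : Matrix d n ℝ) : ℝ :=
  frobSq (W * X - Y) + β * frobSq W

theorem posDef_mul_transpose_add_smul_one (X : Matrix n m ℝ) {β : ℝ} (hβ : 0 < β) :
    (X * Xᵀ + β • (1 : Matrix n n ℝ)).PosDef :=
  PosDef.posSemidef_add (posSemidef_self_mul_conjTranspose X) (PosDef.one.smul hβ)

theorem ridgeCost_add_of_normal_eq {X : Matrix n m ℝ} {Y : Matrix d m ℝ} {β : ℝ}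
    {W₀ : Matrix d n ℝ} (hW₀ : W₀ * (X * Xᵀ + β • (1 : Matrix n n ℝ)) = Y * Xᵀ)
    (D : Matrix d n ℝ) :
    ridgeCost X Y β (W₀ + D) = ridgeCost X Y β W₀ + frobSq (D * X) + β * frobSq D := by
  have hcross : ((W₀ * X - Y) * (D * X)ᵀ).trace + β * (W₀ * Dᵀ).trace = 0 := by
    have : (W₀ * X - Y) * (D * X)ᵀ + β • (W₀ * Dᵀ)
        = (W₀ * (X * Xᵀ + β • (1 : Matrix n n ℝ)) - Y * Xᵀ) * Dᵀ := by
      simp only [transpose_mul, Matrix.sub_mul, Matrix.mul_add, Matrix.add_mul, Matrix.mul_smul,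
        Matrix.smul_mul, Matrix.mul_one, Matrix.mul_assoc]
      abel
    rw [← smul_eq_mul, ← trace_smul, ← trace_add, this, hW₀, sub_self, Matrix.zero_mul,
      trace_zero]
  have hsplit : (W₀ + D) * X - Y = (W₀ * X - Y) + D * X := by
    rw [Matrix.add_mul]; abel
  simp only [ridgeCost, hsplit, frobSq_add]
  linear_combination 2 * hcross

end Ridge

/-- `W* = Y Xᵀ (X Xᵀ + β I)⁻¹` is the unique minimizer of the ridge cost
`J(W) = ‖W X − Y‖_F² + β ‖W‖_F²`. -/
theorem ridge_unique_minimizer {n m d : ℕ}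
    (X : Matrix (Fin n) (Fin m) ℝ) (Y : Matrix (Fin d) (Fin m) ℝ)
    (β : ℝ) (hβ : 0 < β) :
    let J : Matrix (Fin d) (Fin n) ℝ → ℝ :=
      fun W => frobSq (W * X - Y) + β * frobSq W
    let Wstar : Matrix (Fin d) (Fin n) ℝ :=
      Y * X.transpose * (X * X.transpose + β • (1 : Matrix (Fin n) (Fin n) ℝ))⁻¹
    (∀ W, J Wstar ≤ J W) ∧ (∀ W, J Wstar = J W → W = Wstar) := by
  intro J Wstar
  have hunit := (posDef_mul_transpose_add_smul_one X hβ).isUnit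
  have hnormal : Wstar * (X * Xᵀ + β • (1 : Matrix (Fin n) (Fin n) ℝ)) = Y * Xᵀ := by
    rw [Matrix.mul_assoc, nonsing_inv_mul _ ((isUnit_iff_isUnit_det _).mp hunit), Matrix.mul_one]
  have hJ : ∀ W, J W = J Wstar + frobSq ((W - Wstar) * X) + β * frobSq (W - Wstar) := fun W => by
    have h := ridgeCost_add_of_normal_eq hnormal (W - Wstar)
    rwa [add_sub_cancel] at h
  refine ⟨fun W => ?_, fun W hW => ?_⟩
  · linarith [hJ W, frobSq_nonneg ((W - Wstar) * X), mul_nonneg hβ.le (frobSq_nonneg (W - Wstar))]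
  · have hβD : β * frobSq (W - Wstar) = 0 := by
      linarith [hJ W, frobSq_nonneg ((W - Wstar) * X), mul_nonneg hβ.le (frobSq_nonneg (W - Wstar))]
    exact sub_eq_zero.mp (frobSq_eq_zero_iff.mp ((mul_eq_zero.mp hβD).resolve_left hβ.ne'))
end

section
/- Let A and B be real N×m matrices, Y a real d×m matrix, β > 0, and P a real m×m matrix with P * Pᵀ = 1 and Pᵀ * P = 1, such that A * P = −A, B * P = B and Y * P = −Y. Let X be the (2N)×m matrix obtained by stacking A on top of B, and let W = Y * Xᵀ * (X * Xᵀ + β • 1)⁻¹ be the ridge readout matrix, written in blocks W = [W₁ W₂] with W₁, W₂ real d×N matrices acting on the A-rows and B-rows respectively. Then W₂ = 0 ('symmetry kills the square': the square readout matrix W_out^{(2)} vanishes). -/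
open Matrix

lemma commute_nonsing_inv' {n : Type*} [Fintype n] [DecidableEq n]
    (S G : Matrix n n ℝ) (h : S * G = G * S) : S * G⁻¹ = G⁻¹ * S := by
  by_cases hG : IsUnit G.det
  · calc S * G⁻¹ = G⁻¹ * G * (S * G⁻¹) := by rw [nonsing_inv_mul _ hG, one_mul]
    _ = G⁻¹ * (G * S) * G⁻¹ := by noncomm_ring
    _ = G⁻¹ * S * (G * G⁻¹) := by rw [← h]; noncomm_ring
    _ = G⁻¹ * S := by rw [mul_nonsing_inv _ hG, mul_one]
  · rw [nonsing_inv_apply_not_isUnit _ hG, mul_zero, zero_mul]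

/-- "Symmetry kills the square": if the training time series admit a half-period shift
`P` (orthogonal) with `A P = −A`, `B P = B`, `Y P = −Y`, then the square readout block
`W₂` of the ridge readout matrix `W = Y Xᵀ (X Xᵀ + β I)⁻¹` (with `X` stacking `A` over
`B`) vanishes. -/
theorem symmetry_kills_the_square {N m d : ℕ}
    (A B : Matrix (Fin N) (Fin m) ℝ) (Y : Matrix (Fin d) (Fin m) ℝ)
    (β : ℝ) (hβ : 0 < β) (P : Matrix (Fin m) (Fin m) ℝ)
    (hP1 : P * P.transpose = 1) (hP2 : P.transpose * P = 1)
    (hA : A * P = -A) (hB : B * P = B) (hY : Y * P = -Y) :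
    let X : Matrix (Fin N ⊕ Fin N) (Fin m) ℝ := Matrix.fromRows A B
    let W : Matrix (Fin d) (Fin N ⊕ Fin N) ℝ :=
      Y * X.transpose *
        (X * X.transpose + β • (1 : Matrix (Fin N ⊕ Fin N) (Fin N ⊕ Fin N) ℝ))⁻¹
    (Matrix.of fun i j => W i (Sum.inr j)) = (0 : Matrix (Fin d) (Fin N) ℝ) := by
  intro X W
  set S : Matrix (Fin N ⊕ Fin N) (Fin N ⊕ Fin N) ℝ :=
    fromBlocks (-1) 0 0 1 with hS
  have hSX : S * X = X * P := by
    rw [hS, fromBlocks_mul_fromRows, fromRows_mul, hA, hB]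
    simp
  have hST : S.transpose = S := by
    rw [hS, fromBlocks_transpose]; simp
  have hSS : S * S = 1 := by
    rw [hS, fromBlocks_multiply]; simp [← fromBlocks_one]
  set G : Matrix (Fin N ⊕ Fin N) (Fin N ⊕ Fin N) ℝ :=
    X * X.transpose + β • 1 with hG
  have hXX : S * (X * X.transpose) * S = X * X.transpose := by
    calc S * (X * X.transpose) * S
        = (S * X) * (S * X).transpose := by
          rw [transpose_mul, hST]; simp only [Matrix.mul_assoc]
      _ = X * (P * P.transpose) * X.transpose := by
          rw [hSX, transpose_mul]; simp only [Matrix.mul_assoc]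
      _ = X * X.transpose := by rw [hP1, Matrix.mul_one]
  have hcomm : S * G = G * S := by
    have : S * (X * X.transpose) = X * X.transpose * S := by
      calc S * (X * X.transpose) = S * (X * X.transpose) * (S * S) := by
            rw [hSS, mul_one]
        _ = (S * (X * X.transpose) * S) * S := by simp only [Matrix.mul_assoc]
        _ = X * X.transpose * S := by rw [hXX]
    rw [hG, mul_add, add_mul, this, Matrix.mul_smul, Matrix.smul_mul, mul_one, one_mul]
  have hinv : S * G⁻¹ = G⁻¹ * S := commute_nonsing_inv' S G hcomm
  have hYPt : Y * P.transpose = -Y := by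
    have h := congrArg (· * P.transpose) hY
    simp only [Matrix.mul_assoc, hP1, Matrix.mul_one, Matrix.neg_mul] at h
    exact neg_eq_iff_eq_neg.mp h.symm
  have hYXS : Y * X.transpose * S = -(Y * X.transpose) := by
    calc Y * X.transpose * S = Y * (S * X).transpose := by
          rw [transpose_mul, hST, Matrix.mul_assoc]
      _ = Y * P.transpose * X.transpose := by
          rw [hSX, transpose_mul, Matrix.mul_assoc]
      _ = -(Y * X.transpose) := by rw [hYPt, Matrix.neg_mul]
  have hWS : W * S = -W := by
    show Y * X.transpose * G⁻¹ * S = -(Y * X.transpose * G⁻¹)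
    rw [Matrix.mul_assoc, ← hinv, ← Matrix.mul_assoc, hYXS, Matrix.neg_mul]
  ext i j
  have h := congrFun (congrFun hWS i) (Sum.inr j)
  have hws : (W * S) i (Sum.inr j) = W i (Sum.inr j) := by
    rw [mul_apply, hS]
    rw [Fintype.sum_sum_type]
    simp [fromBlocks, Matrix.one_apply, Finset.sum_ite_eq']
  rw [hws] at h
  have : W i (Sum.inr j) = 0 := by
    have h2 : W i (Sum.inr j) = -(W i (Sum.inr j)) := by simpa using h
    linarith
  simpa using this
end

section
/- Let A and B be real N×m matrices, Y a real d×m matrix, and β > 0. Let X be the (2N)×m matrix stacking A on top of B and X' the (2N)×m matrix stacking −A on top of B, and set Y' = −Y. Write the ridge readout matrices W = Y * Xᵀ * (X * Xᵀ + β • 1)⁻¹ and W' = Y' * X'ᵀ * (X' * X'ᵀ + β • 1)⁻¹ in blocks W = [W₁ W₂], W' = [W'₁ W'₂] with d×N blocks acting on the top and bottom rows. Then W'₁ = W₁ and W'₂ = −W₂. -/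
open Matrix

/-- Negating the linear response block and the targets while fixing the square response
block yields a ridge readout with equal linear block and negated square block
(Eq. B9 of the paper). -/
theorem readout_symmetry_under_negation {N m d : ℕ}
    (A B : Matrix (Fin N) (Fin m) ℝ) (Y : Matrix (Fin d) (Fin m) ℝ)
    (β : ℝ) (hβ : 0 < β) :
    let X : Matrix (Fin N ⊕ Fin N) (Fin m) ℝ := Matrix.fromRows A B
    let X' : Matrix (Fin N ⊕ Fin N) (Fin m) ℝ := Matrix.fromRows (-A) B
    let W : Matrix (Fin d) (Fin N ⊕ Fin N) ℝ :=
      Y * X.transpose *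
        (X * X.transpose + β • (1 : Matrix (Fin N ⊕ Fin N) (Fin N ⊕ Fin N) ℝ))⁻¹
    let W' : Matrix (Fin d) (Fin N ⊕ Fin N) ℝ :=
      (-Y) * X'.transpose *
        (X' * X'.transpose + β • (1 : Matrix (Fin N ⊕ Fin N) (Fin N ⊕ Fin N) ℝ))⁻¹
    (∀ i j, W' i (Sum.inl j) = W i (Sum.inl j)) ∧
      (∀ i j, W' i (Sum.inr j) = -W i (Sum.inr j)) := by
  intro X X' W W'
  set T : Matrix (Fin N ⊕ Fin N) (Fin N ⊕ Fin N) ℝ :=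
    Matrix.fromBlocks (-1) 0 0 1 with hT
  have hTT : T * T = 1 := by
    simp [hT, Matrix.fromBlocks_multiply, ← Matrix.fromBlocks_one]
  have hTinv : T⁻¹ = T := Matrix.inv_eq_right_inv hTT
  have hTtrans : T.transpose = T := by
    simp [hT, Matrix.fromBlocks_transpose]
  have hTX : T * X = X' := by
    simp [hT, X, X', Matrix.fromBlocks_mul_fromRows]
  set M : Matrix (Fin N ⊕ Fin N) (Fin N ⊕ Fin N) ℝ :=
    X * X.transpose + β • 1 with hM
  have hTM : T * M * T =
      X' * X'.transpose + β • (1 : Matrix (Fin N ⊕ Fin N) (Fin N ⊕ Fin N) ℝ) := by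
    rw [← hTX, hM]
    have : (T * X).transpose = X.transpose * T := by
      rw [Matrix.transpose_mul, hTtrans]
    rw [this]
    rw [Matrix.mul_add, Matrix.add_mul]
    congr 1
    · simp only [Matrix.mul_assoc]
    · rw [Matrix.mul_smul, Matrix.smul_mul, Matrix.mul_one, hTT]
  have hW' : W' = -(W * T) := by
    show (-Y) * X'.transpose * (X' * X'.transpose + β • 1)⁻¹ = _
    rw [← hTM, Matrix.mul_inv_rev, Matrix.mul_inv_rev, hTinv, ← hTX,
      Matrix.transpose_mul, hTtrans]
    simp only [Matrix.neg_mul, W, hM]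
    simp only [Matrix.mul_assoc]
    rw [← Matrix.mul_assoc T T, hTT, Matrix.one_mul]
  constructor <;> intro i j <;>
    simp [hW', Matrix.mul_apply, hT, Fintype.sum_sum_type,
      Matrix.fromBlocks_apply₁₁, Matrix.fromBlocks_apply₂₁,
      Matrix.fromBlocks_apply₁₂, Matrix.fromBlocks_apply₂₂,
      Matrix.one_apply, Finset.sum_ite_eq']
end
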